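/- Let a_1 ≤ a_2 ≤ ... ≤ a_n be nonnegative reals sorted in non-decreasing order and b ∈ ℝ with a_{n-1} + a_n > b and a_j ≤ b for each j. Then there exists a smallest index φ ∈ {1, ..., n−1} with a_φ + a_{φ+1} > b, and for every i < φ and every j ≤ φ the pair (i, j) with i ≠ j is not in conflict for the knapsack constraint ∑_{t=1}^n a_t x_t ≤ b; that is, all conflicts of the knapsack involve at least one index in {φ+1, ..., n}, and any two indices i < j with j ≤ φ admit a feasible binary point with x_i = x_j = 1. -/
import Mathlib


/-- Correctness of the threshold search in Clique Detection.  Let `a` be nonnegative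
coefficients sorted in non-decreasing order with the two largest exceeding `b` and
each individual coefficient at most `b`.  Then there is a smallest index `φ` (with
`φ + 1 < n`) such that `a φ + a (φ+1) > b`, and for all distinct indices `i < φ` and
`j ≤ φ` the pair `(i, j)` is not in conflict for the knapsack constraint: there is a
feasible binary point with `x i = x j = 1`.  Hence every conflict of the knapsack
involves at least one index above `φ`. -/
theorem cliqueDetection_threshold (n : ℕ) (hn : 2 ≤ n)
    (a : Fin n → ℝ) (b : ℝ)
    (ha0 : ∀ j, 0 ≤ a j) (hmono : Monotone a)
    (hlast : b < a ⟨n - 2, by omega⟩ + a ⟨n - 1, by omega⟩)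
    (hub : ∀ j, a j ≤ b) :
    ∃ φ : Fin n, ∃ hφ1 : φ.val + 1 < n,
      b < a φ + a ⟨φ.val + 1, hφ1⟩ ∧
      (∀ ψ : Fin n, ∀ hψ : ψ.val + 1 < n,
        b < a ψ + a ⟨ψ.val + 1, hψ⟩ → φ ≤ ψ) ∧
      (∀ i j : Fin n, i < φ → j ≤ φ → i ≠ j →
        ∃ x : Fin n → ℝ, (∀ t, x t = 0 ∨ x t = 1) ∧
          (∑ t, a t * x t ≤ b) ∧ x i = 1 ∧ x j = 1) := by
  classical
  set P : ℕ → Prop := fun m => ∃ h : m + 1 < n, b < a ⟨m, by omega⟩ + a ⟨m + 1, h⟩ with hP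
  have hex : ∃ m, P m := ⟨n - 2, by omega, by
    have he : (⟨n - 2 + 1, by omega⟩ : Fin n) = ⟨n - 1, by omega⟩ := by
      apply Fin.ext; simp only [Fin.val_mk]; omega
    rw [he]; exact hlast⟩
  let φ0 := Nat.find hex
  have hPφ : P φ0 := Nat.find_spec hex
  obtain ⟨hφ1, hφgt⟩ := hPφ
  have hmin : ∀ k < φ0, ¬ P k := fun k hk => Nat.find_min hex hk
  -- key: for k < φ0 with k+1 < n, sum of consecutive ≤ b
  have hkey : ∀ k (hk : k < φ0) (hk1 : k + 1 < n),
      a ⟨k, by omega⟩ + a ⟨k + 1, hk1⟩ ≤ b := by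
    intro k hk hk1
    by_contra hc
    exact hmin k hk ⟨hk1, lt_of_not_ge hc⟩
  refine ⟨⟨φ0, by omega⟩, hφ1, hφgt, ?_, ?_⟩
  · intro ψ hψ hψgt
    have : φ0 ≤ ψ.val := Nat.find_min' hex ⟨hψ, hψgt⟩
    exact this
  · intro i j hi hj hij
    have hi' : i.val < φ0 := hi
    have hj' : j.val ≤ φ0 := hj
    -- show a i + a j ≤ b
    have hsum : a i + a j ≤ b := by
      rcases lt_or_gt_of_ne (fun h => hij (Fin.ext h) : i.val ≠ j.val) with h | h
      · -- i < j ≤ φ0, use pair (j-1, j)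
        have hj1 : j.val - 1 + 1 < n := by omega
        have hlt : j.val - 1 < φ0 := by omega
        have := hkey (j.val - 1) hlt hj1
        have hle : a i ≤ a ⟨j.val - 1, by omega⟩ := hmono (by rw [Fin.le_def]; simp only [Fin.val_mk]; omega)
        have hjeq : (⟨j.val - 1 + 1, hj1⟩ : Fin n) = j := Fin.ext (by simp only [Fin.val_mk]; omega)
        rw [hjeq] at this
        linarith
      · -- j < i < φ0, use pair (i, i+1)
        have hi1 : i.val + 1 < n := by omega
        have := hkey i.val hi' hi1
        have hle : a j ≤ a ⟨i.val + 1, hi1⟩ := hmono (by rw [Fin.le_def]; simp only [Fin.val_mk]; omega)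
        have hieq : (⟨i.val, by omega⟩ : Fin n) = i := Fin.ext rfl
        rw [hieq] at this
        linarith
    refine ⟨fun t => (if t = i then 1 else 0) + (if t = j then 1 else 0), ?_, ?_, ?_, ?_⟩
    · intro t
      by_cases h1 : t = i <;> by_cases h2 : t = j <;> simp [h1, h2] at * <;> tauto
    · have : (∑ t, a t * ((if t = i then 1 else 0) + (if t = j then 1 else 0)))
          = a i + a j := by
        simp [mul_add, Finset.sum_add_distrib, mul_ite]
      rw [this]; exact hsum
    · simp [hij]
    · simp [Ne.symm hij]
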